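/- Let Θ and Ξ be arbitrary types, let S ≥ 1 and K ∈ ℕ, let η : Fin S → Θ → ℝ, T : Fin S → Ξ → ℝ, and let c : Fin (K+1) → ℝ be polynomial coefficients not depending on θ. Set D = Nat.choose (K + S) S - 1. Then for every M ∈ ℕ there exist n : Θ → Fin D → ℝ, t : (Fin M → Ξ) → Fin D → ℝ, and a constant r ∈ ℝ (independent of θ and ξ) such that for all θ and ξ, ∑_{i : Fin M} ∑_{k = 0}^{K} c k · (∑_{s : Fin S} η s θ · T s (ξ i))^k = ∑_{j : Fin D} n θ j · t ξ j + r. That is, the Monte Carlo sum of an arbitrary degree-K polynomial g(w) = p_K(w) of the weights admits a factorization of size C(K+S, S) − 1 independent of M, after discarding the θ-independent constant term. (Corollary 3.) -/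

import Mathlib

/-!
By the multinomial theorem, `(∑ s, η s θ * T s ξ) ^ k` is a sum over the multisets `m` of size `k`
of `Fin S` of the monomial `∏_{s ∈ m} η s θ` times a coefficient depending on `ξ` alone. Hence
`p_K(w)` is linear in the monomials of degree `1 ≤ k ≤ K`, up to the constant `c₀`, and so is its
Monte Carlo sum, with the same monomials. There are `∑_{k=1}^{K} multichoose S k = C(K + S, S) - 1`
of them, whatever `M`.
-/

open Finset

section Factorization

variable {R Θ X : Type*} [CommSemiring R]

/-- The paper's parameterization `(G, n, t)` of `F`, with `d_P = card ι`. -/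
def AdmitsFactorization (F : Θ → X → R) (ι : Type*) [Fintype ι] : Prop :=
  ∃ (n : Θ → ι → R) (t : X → ι → R) (r : R), ∀ θ ξ, F θ ξ = ∑ j, n θ j * t ξ j + r

variable {F : Θ → X → R} {ι κ : Type*} [Fintype ι] [Fintype κ]

theorem AdmitsFactorization.of_equiv (hF : AdmitsFactorization F ι) (e : ι ≃ κ) :
    AdmitsFactorization F κ := by
  obtain ⟨n, t, r, hF⟩ := hF
  refine ⟨fun θ j => n θ (e.symm j), fun ξ j => t ξ (e.symm j), r, fun θ ξ => ?_⟩
  rw [hF, e.symm.sum_comp fun j => n θ j * t ξ j]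

theorem AdmitsFactorization.sum_samples (hF : AdmitsFactorization F ι) :
    AdmitsFactorization (fun θ (ξ : κ → X) => ∑ i, F θ (ξ i)) ι := by
  obtain ⟨n, t, r, hF⟩ := hF
  refine ⟨n, fun ξ j => ∑ i, t (ξ i) j, Fintype.card κ • r, fun θ ξ => ?_⟩
  simp only [hF, sum_add_distrib, mul_sum, sum_const, card_univ]
  rw [sum_comm]

end Factorization

theorem sum_mul_pow_eq_sum_sym {R σ : Type*} [CommSemiring R] [Fintype σ] [DecidableEq σ]
    (a b : σ → R) (k : ℕ) :
    (∑ s, a s * b s) ^ k =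
      ∑ m : Sym σ k, ((m : Multiset σ).countPerms : R) *
        (((m : Multiset σ).map a).prod * ((m : Multiset σ).map b).prod) := by
  rw [sum_pow, sym_univ]
  simp only [Multiset.prod_map_mul]
  rfl

theorem card_sigma_sym_succ (σ : Type*) [Fintype σ] [DecidableEq σ] (K : ℕ) :
    Fintype.card (Σ k : Fin K, Sym σ (k + 1)) =
      (K + Fintype.card σ).choose (Fintype.card σ) - 1 := by
  simp only [Fintype.card_sigma, Sym.card_sym_eq_multichoose]
  rw [Fin.sum_univ_eq_sum_range (fun k => (Fintype.card σ).multichoose (k + 1)),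
    ← Nat.sum_range_multichoose, sum_range_succ', Nat.multichoose_zero_right, Nat.add_sub_cancel]

theorem admitsFactorization_polynomial {R Θ X σ : Type*} [CommSemiring R] [Fintype σ]
    [DecidableEq σ] (η : σ → Θ → R) (T : σ → X → R) {K : ℕ} (c : Fin (K + 1) → R) :
    AdmitsFactorization (fun θ ξ => ∑ k : Fin (K + 1), c k * (∑ s, η s θ * T s ξ) ^ (k : ℕ))
      (Σ k : Fin K, Sym σ (k + 1)) := by
  refine ⟨fun θ x => ((x.2 : Multiset σ).map (η · θ)).prod,
    fun ξ x => c x.1.succ * (x.2 : Multiset σ).countPerms * ((x.2 : Multiset σ).map (T · ξ)).prod,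
    c 0, fun θ ξ => ?_⟩
  beta_reduce
  rw [Fin.sum_univ_succ, Fin.val_zero, pow_zero, mul_one, add_comm]
  congr 1
  simp only [Fin.val_succ, sum_mul_pow_eq_sum_sym, mul_sum, Fintype.sum_sigma]
  refine sum_congr rfl fun k _ => sum_congr rfl fun m _ => ?_
  ring

theorem mc_repar_polynomial_general {Θ Ξ : Type*} (S K : ℕ)
    (η : Fin S → Θ → ℝ) (T : Fin S → Ξ → ℝ) (c : Fin (K + 1) → ℝ) :
    ∀ M : ℕ, ∃ (n : Θ → Fin ((K + S).choose S - 1) → ℝ)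
      (t : (Fin M → Ξ) → Fin ((K + S).choose S - 1) → ℝ) (r : ℝ),
      ∀ (θ : Θ) (ξ : Fin M → Ξ),
        ∑ i : Fin M, ∑ k : Fin (K + 1),
            c k * (∑ s : Fin S, η s θ * T s (ξ i)) ^ (k : ℕ) =
          (∑ j, n θ j * t ξ j) + r := by
  intro M
  have hcard := card_sigma_sym_succ (Fin S) K
  rw [Fintype.card_fin] at hcard
  exact ((admitsFactorization_polynomial η T c).sum_samples (κ := Fin M)).of_equiv
    (Fintype.equivFinOfCardEq hcard)

/-- Corollary 3: the Monte Carlo sum of an arbitrary degree-`K` polynomial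
`p_K(w) = ∑_{k=0}^K c_k w^k` of the weights `W(θ,ξ) = ∑ s, η s θ * T s ξ`
admits, for every `M`, a factorization of size `D = C(K + S, S) - 1`,
independent of `M`, up to a constant (θ- and ξ-independent) remainder. -/
theorem mc_repar_polynomial {Θ Ξ : Type*} (S K : ℕ) (hS : 1 ≤ S)
    (η : Fin S → Θ → ℝ) (T : Fin S → Ξ → ℝ) (c : Fin (K + 1) → ℝ) :
    ∀ M : ℕ, ∃ (n : Θ → Fin ((K + S).choose S - 1) → ℝ)
      (t : (Fin M → Ξ) → Fin ((K + S).choose S - 1) → ℝ) (r : ℝ),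
      ∀ (θ : Θ) (ξ : Fin M → Ξ),
        ∑ i : Fin M, ∑ k : Fin (K + 1),
            c k * (∑ s : Fin S, η s θ * T s (ξ i)) ^ (k : ℕ) =
          (∑ j, n θ j * t ξ j) + r :=
  mc_repar_polynomial_general S K η T c
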